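/- Let p ∈ (0,1) and N ≥ 1, and let P_N(x) = ((−1)^N / √(2N+1)) · ∑_{n=0}^N C(N,n) C(N+n,n) (−x)^n be the normalized shifted Legendre polynomial. Then ∫_0^1 P_N(x) dμ_p(x) = ((p−1)^N / (√(2N+1) · ∏_{n=1}^N (2^n − 1))) · det B_N(p; c_0, …, c_N), where c_j = (−1)^j C(N,j) C(N+j,j) for 0 ≤ j ≤ N. -/

import Mathlib

/-!
Splitting off the first binary digit shows that `μ_p` is self-similar,
`μ_p = p · (x ↦ x/2)_* μ_p + (1 - p) · (x ↦ (x+1)/2)_* μ_p`,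
so its moments `m_k = ∫ x^k dμ_p` satisfy
`(2^(k+1) - 1) m_(k+1) = (1 - p) ∑_(j ≤ k) C(k+1, j) m_j`. These recursions say exactly
that the first `N` rows of `B_N` annihilate `m = (m_0, …, m_N)`. Since `m_0 = 1`, replacing the
first column of `B_N` by `B_N m` does not change the determinant; the new first column has the
single entry `∑ c_j m_j` in the last row and the complementary minor is lower triangular, so
`det B_N = (-1)^N (∑ c_j m_j) ∏_(n=1)^N (1 - 2^n)/(1 - p)`. The integral of `P_N` is
`(-1)^N (∑ c_j m_j) / √(2N+1)`.
-/

open MeasureTheory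

/-- The probability measure on `{0,1}` (encoded as `Bool`, `false` ↔ digit `0`,
`true` ↔ digit `1`) giving mass `p` to the digit `0` and mass `1 - p` to the digit `1`. -/
noncomputable def bernoulliBool (p : ℝ) : Measure Bool :=
  ENNReal.ofReal p • Measure.dirac false + ENNReal.ofReal (1 - p) • Measure.dirac true

/-- `ν` is the infinite product, over `n ≥ 1` (indexed here by `ℕ`, where index `n`
stands for the digit `n+1`), of the Bernoulli measures `bernoulliBool p`:
it is characterized as the projective limit of the finite product measures. -/
def IsBernoulliProduct (p : ℝ) (ν : Measure (ℕ → Bool)) : Prop :=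
  IsProjectiveLimit ν fun J : Finset ℕ => Measure.pi fun _ : J => bernoulliBool p

/-- The binary expansion map sending a 0-1 sequence `(x_n)_{n ≥ 1}` to
`∑_{n=1}^∞ x_n 2^{-n}` (index `n : ℕ` stands for the digit `n+1`). -/
noncomputable def binExpand (x : ℕ → Bool) : ℝ :=
  ∑' n : ℕ, if x n then ((2 : ℝ) ^ (n + 1))⁻¹ else 0

/-- `μ` is the Bernoulli measure `μ_p` on `ℝ`: the pushforward under the binary
expansion map of the infinite product of Bernoulli measures on `{0,1}`. -/
def IsBernoulliMeasure (p : ℝ) (μ : Measure ℝ) : Prop :=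
  ∃ ν : Measure (ℕ → Bool), IsBernoulliProduct p ν ∧ μ = ν.map binExpand

/-- The `(N+1) × (N+1)` complex Hessenberg matrix `B_N(p; c_0, …, c_N)` (1-indexed in the
paper, 0-indexed here): for `0 ≤ i < N` the row `i` (paper row `i+1`) has entries
`C(i+1, j)` for `j ≤ i`, the entry `(1 - 2^{i+1})/(1-p)` at column `j = i+1`, and `0`
for `j > i+1`; the last row (row `N`) is `(c_0, c_1, …, c_N)`. -/
noncomputable def Bmat (N : ℕ) (p : ℝ) (c : Fin (N + 1) → ℂ) :
    Matrix (Fin (N + 1)) (Fin (N + 1)) ℂ := fun i j =>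
  if (i : ℕ) < N then
    if (j : ℕ) ≤ (i : ℕ) then (Nat.choose ((i : ℕ) + 1) (j : ℕ) : ℂ)
    else if (j : ℕ) = (i : ℕ) + 1 then (1 - 2 ^ ((i : ℕ) + 1)) / (1 - (p : ℂ))
    else 0
  else c j


open Set Measure Matrix
open scoped ENNReal

theorem Finset.prod_eq_ite_zero_mul_prod_preimage_succ {M : Type*} [CommMonoid M]
    (s : Finset ℕ) (f : ℕ → M) :
    ∏ i ∈ s, f i = (if 0 ∈ s then f 0 else 1) *
      ∏ i ∈ s.preimage Nat.succ Nat.succ_injective.injOn, f (i + 1) := by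
  classical
  rw [← Finset.prod_filter_mul_prod_filter_not s (· = 0), Finset.filter_eq',
    Finset.prod_preimage' Nat.succ s _ f]
  congr 1
  · split_ifs <;> simp
  · congr 1
    ext i
    simp [Nat.pos_iff_ne_zero]

section SeqCons

variable {X : Type*} [MeasurableSpace X]

def seqCons (a : X) (s : ℕ → X) : ℕ → X
  | 0 => a
  | n + 1 => s n

theorem measurable_seqCons : Measurable fun q : X × (ℕ → X) => seqCons q.1 q.2 :=
  measurable_pi_iff.2 fun n => by
    cases n
    exacts [measurable_fst, (measurable_pi_apply _).comp measurable_snd]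

theorem infinitePi_map_seqCons (μ : ℕ → Measure X) [∀ n, IsProbabilityMeasure (μ n)] :
    ((μ 0).prod (infinitePi fun n => μ (n + 1))).map (fun q => seqCons q.1 q.2) =
      infinitePi μ := by
  refine eq_infinitePi μ fun s t ht => ?_
  have hpre : (fun q : X × (ℕ → X) => seqCons q.1 q.2) ⁻¹' Set.pi s t =
      {a | 0 ∈ s → a ∈ t 0} ×ˢ
        Set.pi (s.preimage Nat.succ Nat.succ_injective.injOn) fun n => t (n + 1) := by
    ext ⟨a, y⟩
    simp only [Set.mem_preimage, Set.mem_pi, Finset.mem_coe, Set.mem_prod, Set.mem_ofPred_eq,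
      Finset.mem_preimage]
    constructor
    · exact fun h => ⟨h 0, fun n hn => h (n + 1) hn⟩
    · rintro ⟨h0, hs⟩ (_ | n) hn
      exacts [h0 hn, hs n hn]
  rw [map_apply measurable_seqCons (.pi s.countable_toSet fun i _ => ht i), hpre, prod_prod,
    infinitePi_pi _ fun i _ => ht _,
    Finset.prod_eq_ite_zero_mul_prod_preimage_succ s fun i => μ i (t i)]
  congr 1
  split_ifs with h <;> simp [h]

end SeqCons

theorem hasSum_inv_two_pow_succ : HasSum (fun n : ℕ => ((2 : ℝ) ^ (n + 1))⁻¹) 1 := by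
  simpa [pow_succ, div_eq_mul_inv, mul_comm] using hasSum_geometric_two' 1

theorem binExpand_term_mem_Icc (b : Bool) (n : ℕ) :
    (if b then ((2 : ℝ) ^ (n + 1))⁻¹ else 0) ∈ Icc 0 ((2 : ℝ) ^ (n + 1))⁻¹ := by
  cases b <;> simp [le_of_lt]

theorem summable_binExpand (x : ℕ → Bool) :
    Summable fun n => if x n then ((2 : ℝ) ^ (n + 1))⁻¹ else 0 :=
  hasSum_inv_two_pow_succ.summable.of_nonneg_of_le (binExpand_term_mem_Icc _ · |>.1)
    (binExpand_term_mem_Icc _ · |>.2)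

theorem binExpand_mem_Icc (x : ℕ → Bool) : binExpand x ∈ Icc (0 : ℝ) 1 :=
  ⟨tsum_nonneg (binExpand_term_mem_Icc _ · |>.1), hasSum_inv_two_pow_succ.tsum_eq ▸
    (summable_binExpand x).tsum_le_tsum (binExpand_term_mem_Icc _ · |>.2)
      hasSum_inv_two_pow_succ.summable⟩

theorem continuous_binExpand : Continuous binExpand :=
  continuous_tsum (fun n => (continuous_of_discreteTopology
      (f := fun b : Bool => if b then ((2 : ℝ) ^ (n + 1))⁻¹ else 0)).comp (continuous_apply n))
    (summable_binExpand fun _ => true) fun n x => by split <;> simp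

theorem binExpand_seqCons (b : Bool) (y : ℕ → Bool) :
    binExpand (seqCons b y) = (binExpand y + if b then 1 else 0) / 2 := by
  rw [binExpand, (summable_binExpand _).tsum_eq_zero_add, binExpand, add_div, ← tsum_div_const,
    add_comm]
  congr 1
  · refine tsum_congr fun n => ?_
    by_cases h : y n <;> simp [seqCons, h, pow_succ]
    ring
  · cases b <;> norm_num [seqCons]

section Bernoulli

variable {p : ℝ}

theorem isProbabilityMeasure_bernoulliBool (hp : p ∈ Icc (0 : ℝ) 1) :
    IsProbabilityMeasure (bernoulliBool p) :=
  ⟨by simp [bernoulliBool, ← ENNReal.ofReal_add hp.1 (sub_nonneg.2 hp.2)]⟩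

theorem IsBernoulliProduct.eq_infinitePi (hp : p ∈ Icc (0 : ℝ) 1) {ν : Measure (ℕ → Bool)}
    (hν : IsBernoulliProduct p ν) : ν = infinitePi fun _ => bernoulliBool p :=
  have := isProbabilityMeasure_bernoulliBool hp
  hν.unique (isProjectiveLimit_infinitePi _)

namespace IsBernoulliMeasure

variable {μ : Measure ℝ}

theorem eq_add_map (hp : p ∈ Icc (0 : ℝ) 1) (hμ : IsBernoulliMeasure p μ) :
    μ = ENNReal.ofReal p • μ.map (· / 2) +
      ENNReal.ofReal (1 - p) • μ.map fun x => (x + 1) / 2 := by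
  obtain ⟨ν, hν, rfl⟩ := hμ
  have := isProbabilityMeasure_bernoulliBool hp
  obtain rfl := hν.eq_infinitePi hp
  set ν := infinitePi fun _ : ℕ => bernoulliBool p
  have hcons : ν = ((bernoulliBool p).prod ν).map fun q => seqCons q.1 q.2 :=
    (infinitePi_map_seqCons fun _ => bernoulliBool p).symm
  have hmeas := continuous_binExpand.measurable
  conv_lhs => rw [hcons]
  rw [map_map hmeas measurable_seqCons, bernoulliBool, add_prod, prod_smul_left, prod_smul_left,
    dirac_prod, dirac_prod, Measure.map_add _ _ (hmeas.comp measurable_seqCons),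
    Measure.map_smul, Measure.map_smul,
    map_map (hmeas.comp measurable_seqCons) measurable_prodMk_left,
    map_map (hmeas.comp measurable_seqCons) measurable_prodMk_left,
    map_map (by fun_prop) hmeas, map_map (by fun_prop) hmeas]
  congr 3 <;> ext y <;> simp [binExpand_seqCons]

theorem isProbabilityMeasure (hp : p ∈ Icc (0 : ℝ) 1) (hμ : IsBernoulliMeasure p μ) :
    IsProbabilityMeasure μ := by
  obtain ⟨ν, hν, rfl⟩ := hμ
  have := isProbabilityMeasure_bernoulliBool hp
  have := hν.isProbabilityMeasure
  exact isProbabilityMeasure_map continuous_binExpand.aemeasurable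

theorem restrict_Icc (hμ : IsBernoulliMeasure p μ) : μ.restrict (Icc 0 1) = μ := by
  obtain ⟨ν, -, rfl⟩ := hμ
  exact restrict_eq_self_of_ae_mem <| (ae_map_iff continuous_binExpand.aemeasurable
    measurableSet_Icc).2 (.of_forall binExpand_mem_Icc)

theorem integrable_of_continuous (hp : p ∈ Icc (0 : ℝ) 1) (hμ : IsBernoulliMeasure p μ)
    {f : ℝ → ℝ} (hf : Continuous f) : Integrable f μ := by
  have := hμ.isProbabilityMeasure hp
  have h := hf.continuousOn.integrableOn_compact (μ := μ) (isCompact_Icc (a := 0) (b := 1))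
  rwa [IntegrableOn, hμ.restrict_Icc] at h

theorem integral_eq_add (hp : p ∈ Icc (0 : ℝ) 1) (hμ : IsBernoulliMeasure p μ)
    {f : ℝ → ℝ} (hf : Continuous f) :
    ∫ x, f x ∂μ = p * ∫ x, f (x / 2) ∂μ + (1 - p) * ∫ x, f ((x + 1) / 2) ∂μ := by
  have hint {g : ℝ → ℝ} (hg : Continuous g) (c : ℝ≥0∞) (hc : c ≠ ⊤) :
      Integrable f (c • μ.map g) :=
    ((integrable_map_measure hf.aestronglyMeasurable hg.aemeasurable).2
      (hμ.integrable_of_continuous hp (hf.comp hg))).smul_measure hc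
  conv_lhs => rw [hμ.eq_add_map hp]
  rw [integral_add_measure (hint (by fun_prop) _ ENNReal.ofReal_ne_top)
      (hint (by fun_prop) _ ENNReal.ofReal_ne_top),
    integral_smul_measure, integral_smul_measure,
    integral_map (by fun_prop) hf.aestronglyMeasurable,
    integral_map (by fun_prop) hf.aestronglyMeasurable,
    ENNReal.toReal_ofReal hp.1, ENNReal.toReal_ofReal (sub_nonneg.2 hp.2)]
  rfl

theorem two_pow_sub_one_mul_integral_pow_succ (hp : p ∈ Icc (0 : ℝ) 1)
    (hμ : IsBernoulliMeasure p μ) (k : ℕ) :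
    (2 ^ (k + 1) - 1) * ∫ x, x ^ (k + 1) ∂μ =
      (1 - p) * ∑ j ∈ Finset.range (k + 1), ((k + 1).choose j : ℝ) * ∫ x, x ^ j ∂μ := by
  have hpow (j : ℕ) : Integrable (fun x : ℝ => x ^ j) μ :=
    hμ.integrable_of_continuous hp (continuous_pow j)
  have hhalf : ∫ x, (x / 2) ^ (k + 1) ∂μ = (∫ x, x ^ (k + 1) ∂μ) / 2 ^ (k + 1) := by
    simp [div_pow, integral_div]
  have hshift : ∫ x, ((x + 1) / 2) ^ (k + 1) ∂μ =
      (∑ j ∈ Finset.range (k + 2), ((k + 1).choose j : ℝ) * ∫ x, x ^ j ∂μ) /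
        2 ^ (k + 1) := by
    simp_rw [div_pow, add_pow, one_pow, mul_one, integral_div]
    rw [integral_finsetSum _ fun j _ => (hpow j).mul_const _]
    simp_rw [integral_mul_const, mul_comm]
  have h := hμ.integral_eq_add hp (continuous_pow (k + 1))
  rw [hhalf, hshift, Finset.sum_range_succ, Nat.choose_self] at h
  field_simp at h
  linear_combination h

theorem setIntegral_Icc_sum_mul_neg_pow (hp : p ∈ Icc (0 : ℝ) 1) (hμ : IsBernoulliMeasure p μ)
    (s : Finset ℕ) (a : ℕ → ℝ) :
    ∫ x in Icc 0 1, ∑ n ∈ s, a n * (-x) ^ n ∂μ =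
      ∑ n ∈ s, (-1) ^ n * a n * ∫ x, x ^ n ∂μ := by
  rw [hμ.restrict_Icc,
    integral_finsetSum _ fun n _ => hμ.integrable_of_continuous hp (by fun_prop)]
  refine Finset.sum_congr rfl fun n _ => ?_
  rw [← integral_const_mul]
  congr 1 with x
  rw [neg_pow]
  ring

end IsBernoulliMeasure

end Bernoulli

theorem Matrix.det_of_mulVec_castSucc_eq_zero {R : Type*} [CommRing R] {N : ℕ}
    (B : Matrix (Fin (N + 1)) (Fin (N + 1)) R) (v : Fin (N + 1) → R) (hv : v 0 = 1)
    (hB : ∀ i j : Fin N, i < j → B i.castSucc j.succ = 0)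
    (hBv : ∀ i : Fin N, (B *ᵥ v) i.castSucc = 0) :
    B.det = (-1) ^ N * (B *ᵥ v) (Fin.last N) * ∏ i : Fin N, B i.castSucc i.succ := by
  -- replacing column `0` by `B *ᵥ v = ∑ j, v j • (column j of B)` multiplies `det` by `v 0 = 1`
  have hcol : (B.updateCol 0 (B *ᵥ v)).det = B.det := by
    convert det_updateCol_sum B 0 v using 3
    · ext k
      simp [mulVec, dotProduct, mul_comm]
    · rw [hv, one_smul]
  have hsub : (B.updateCol 0 (B *ᵥ v)).submatrix (Fin.last N).succAbove Fin.succ =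
      B.submatrix Fin.castSucc Fin.succ := by
    ext i j
    simp
  rw [← hcol, det_succ_column_zero, Fin.sum_univ_castSucc]
  simp only [updateCol_self, hBv, mul_zero, zero_mul, Finset.sum_const_zero, zero_add, hsub,
    Fin.val_last]
  rw [det_of_isLowerTriangular (B.submatrix Fin.castSucc Fin.succ) fun i j (hij : i < j) =>
    hB i j hij]
  rfl

section Bmat

variable {N : ℕ} (p : ℝ)

theorem Bmat_castSucc_succ_of_lt (c : Fin (N + 1) → ℂ) {i j : Fin N} (hij : i < j) :
    Bmat N p c i.castSucc j.succ = 0 := by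
  have : (i : ℕ) < j := hij
  simp only [Bmat, Fin.val_castSucc, Fin.val_succ]
  rw [if_pos i.2, if_neg (by omega), if_neg (by omega)]

theorem Bmat_castSucc_succ_self (c : Fin (N + 1) → ℂ) (i : Fin N) :
    Bmat N p c i.castSucc i.succ = (1 - 2 ^ ((i : ℕ) + 1)) / (1 - (p : ℂ)) := by
  simp [Bmat]

theorem prod_Bmat_castSucc_succ (c : Fin (N + 1) → ℂ) :
    ∏ i : Fin N, Bmat N p c i.castSucc i.succ =
      (∏ n ∈ Finset.range N, ((2 : ℂ) ^ (n + 1) - 1)) / ((p : ℂ) - 1) ^ N := by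
  simp only [Bmat_castSucc_succ_self]
  rw [Fin.prod_univ_eq_prod_range (fun i => (1 - 2 ^ (i + 1)) / (1 - (p : ℂ))) N,
    Finset.prod_congr rfl fun i _ => (neg_div_neg_eq _ _).symm, Finset.prod_div_distrib,
    Finset.prod_const, Finset.card_range]
  simp only [neg_sub]

theorem Bmat_mulVec_castSucc (c : Fin (N + 1) → ℂ) (v : ℕ → ℂ) (i : Fin N) :
    (Bmat N p c *ᵥ fun j => v j) i.castSucc =
      ∑ j ∈ Finset.range (i + 1), ((i + 1 : ℕ).choose j : ℂ) * v j +
        (1 - 2 ^ ((i : ℕ) + 1)) / (1 - (p : ℂ)) * v (i + 1) := by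
  set b : ℕ → ℂ := fun j => (if j ≤ i then ((i + 1 : ℕ).choose j : ℂ)
    else if j = i + 1 then (1 - 2 ^ ((i : ℕ) + 1)) / (1 - (p : ℂ)) else 0) * v j
  have hb : ∑ j ∈ Finset.range (N + 1), b j = ∑ j ∈ Finset.range (i + 2), b j := by
    refine (Finset.sum_subset (Finset.range_subset_range.2 (by omega)) fun j _ hj => ?_).symm
    simp only [Finset.mem_range] at hj
    simp only [b, if_neg (by omega : ¬j ≤ i), if_neg (by omega : j ≠ i + 1), zero_mul]
  simp only [mulVec, dotProduct, Bmat, Fin.val_castSucc, if_pos i.2]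
  rw [Fin.sum_univ_eq_sum_range b, hb, Finset.sum_range_succ]
  congr 1
  · exact Finset.sum_congr rfl fun j hj => by
      simp only [b, if_pos (Nat.lt_succ_iff.1 (Finset.mem_range.1 hj))]
  · simp [b]

theorem Bmat_mulVec_last (c v : ℕ → ℂ) :
    ((Bmat N p fun j => c j) *ᵥ fun j => v j) (Fin.last N) =
      ∑ j ∈ Finset.range (N + 1), c j * v j := by
  simp [Bmat, mulVec, dotProduct, Fin.sum_univ_eq_sum_range (fun j => c j * v j)]

end Bmat

theorem IsBernoulliMeasure.Bmat_mulVec_integral_pow_castSucc {p : ℝ}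
    (hp : p ∈ Ioo (0 : ℝ) 1) {μ : Measure ℝ} (hμ : IsBernoulliMeasure p μ) {N : ℕ}
    (c : Fin (N + 1) → ℂ) (i : Fin N) :
    (Bmat N p c *ᵥ fun j => ((∫ x, x ^ (j : ℕ) ∂μ : ℝ) : ℂ)) i.castSucc = 0 := by
  have hrec := congrArg ((↑) : ℝ → ℂ)
    (hμ.two_pow_sub_one_mul_integral_pow_succ (Ioo_subset_Icc_self hp) i)
  have hp1 : 1 - (p : ℂ) ≠ 0 := by exact_mod_cast (sub_pos.2 hp.2).ne'
  push_cast at hrec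
  rw [Bmat_mulVec_castSucc p c fun j => ((∫ x, x ^ j ∂μ : ℝ) : ℂ)]
  field_simp
  linear_combination -hrec

theorem stmt14_general (p : ℝ) (hp : p ∈ Set.Ioo (0 : ℝ) 1) (μ : Measure ℝ)
    (hμ : IsBernoulliMeasure p μ) (N : ℕ) :
    ((∫ x in Set.Icc (0 : ℝ) 1,
        ((-1 : ℝ) ^ N / Real.sqrt (2 * N + 1)) *
          ∑ n ∈ Finset.range (N + 1),
            (N.choose n : ℝ) * ((N + n).choose n : ℝ) * (-x) ^ n ∂μ : ℝ) : ℂ) =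
      ((p : ℂ) - 1) ^ N /
          ((Real.sqrt (2 * N + 1) : ℂ) * ∏ n ∈ Finset.range N, ((2 : ℂ) ^ (n + 1) - 1)) *
        (Bmat N p fun j =>
          (-1) ^ (j : ℕ) * (N.choose (j : ℕ) : ℂ) * ((N + (j : ℕ)).choose (j : ℕ) : ℂ)).det := by
  have hp1 : (p : ℂ) - 1 ≠ 0 := by exact_mod_cast (sub_neg.2 hp.2).ne
  have hsqrt : (Real.sqrt (2 * N + 1) : ℂ) ≠ 0 :=
    Complex.ofReal_ne_zero.2 (Real.sqrt_pos.2 (by positivity)).ne'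
  have hprod : ∏ n ∈ Finset.range N, ((2 : ℂ) ^ (n + 1) - 1) ≠ 0 :=
    Finset.prod_ne_zero_iff.2 fun n _ => sub_ne_zero.2 <| by
      exact_mod_cast (Nat.one_lt_two_pow n.succ_ne_zero).ne'
  have := hμ.isProbabilityMeasure (Ioo_subset_Icc_self hp)
  rw [integral_const_mul, hμ.setIntegral_Icc_sum_mul_neg_pow (Ioo_subset_Icc_self hp) _
      fun n => (N.choose n : ℝ) * ((N + n).choose n : ℝ),
    Matrix.det_of_mulVec_castSucc_eq_zero _ (fun j => ((∫ x, x ^ (j : ℕ) ∂μ : ℝ) : ℂ))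
      (by simp) (fun i j => Bmat_castSucc_succ_of_lt p _)
      (hμ.Bmat_mulVec_integral_pow_castSucc hp _),
    Bmat_mulVec_last p (fun j => (-1) ^ j * (N.choose j : ℂ) * ((N + j).choose j : ℂ))
      (fun j => ((∫ x, x ^ j ∂μ : ℝ) : ℂ)), prod_Bmat_castSucc_succ]
  push_cast
  field_simp

/-- For `p ∈ (0,1)` and `N ≥ 1`, the Fourier coefficient of `μ_p` on the
normalized shifted Legendre polynomial
`P_N(x) = ((-1)^N / √(2N+1)) ∑_{n=0}^N C(N,n) C(N+n,n) (-x)^n` is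
`∫_0^1 P_N(x) dμ_p(x) = ((p-1)^N / (√(2N+1) ∏_{n=1}^N (2^n-1))) det B_N(p; c_0, …, c_N)`
with `c_j = (-1)^j C(N,j) C(N+j,j)`. -/
theorem stmt14 (p : ℝ) (hp : p ∈ Set.Ioo (0 : ℝ) 1) (μ : Measure ℝ)
    (hμ : IsBernoulliMeasure p μ) (N : ℕ) (hN : 1 ≤ N) :
    ((∫ x in Set.Icc (0 : ℝ) 1,
        ((-1 : ℝ) ^ N / Real.sqrt (2 * N + 1)) *
          ∑ n ∈ Finset.range (N + 1),
            (N.choose n : ℝ) * ((N + n).choose n : ℝ) * (-x) ^ n ∂μ : ℝ) : ℂ) =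
      ((p : ℂ) - 1) ^ N /
          ((Real.sqrt (2 * N + 1) : ℂ) * ∏ n ∈ Finset.range N, ((2 : ℂ) ^ (n + 1) - 1)) *
        (Bmat N p fun j =>
          (-1) ^ (j : ℕ) * (N.choose (j : ℕ) : ℂ) * ((N + (j : ℕ)).choose (j : ℕ) : ℂ)).det :=
  stmt14_general p hp μ hμ N
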